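/- Let X_1, ..., X_M be i.i.d. uniform random variables on [0, W] with M ≥ 2, and let Δ_min be the minimum gap between consecutive order statistics. Then for 0 ≤ δ ≤ W/(M-1), P(Δ_min > δ) = (1 - (M-1)δ/W)^M. -/

import Mathlib

open MeasureTheory

/-- Minimum gap between consecutive order statistics of `x`. -/
noncomputable def minGap (M : ℕ) (x : Fin M → ℝ) : ℝ :=
  ⨅ i : Fin (M - 1),
    (x (Tuple.sort x ⟨i.1 + 1, by have := i.isLt; omega⟩) -
      x (Tuple.sort x ⟨i.1, by have := i.isLt; omega⟩))

/-- The law of `M` i.i.d. uniform random variables on `[0, W]`. -/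
noncomputable def uniformProd (M : ℕ) (W : ℝ) : Measure (Fin M → ℝ) :=
  Measure.pi fun _ : Fin M => (ENNReal.ofReal W)⁻¹ • volume.restrict (Set.Icc (0 : ℝ) W)

namespace CcdfAux

variable {N : ℕ}

/-- Set of tuples whose consecutive gaps along `σ` all exceed `δ`. -/
def gapSet (δ : ℝ) (σ : Equiv.Perm (Fin (N + 2))) : Set (Fin (N + 2) → ℝ) :=
  {x | ∀ k : Fin (N + 1), δ < x (σ k.succ) - x (σ k.castSucc)}

lemma measurableSet_gapSet (δ : ℝ) (σ : Equiv.Perm (Fin (N + 2))) :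
    MeasurableSet (gapSet δ σ) := by
  have : gapSet δ σ = ⋂ k : Fin (N + 1),
      {x : Fin (N + 2) → ℝ | δ < x (σ k.succ) - x (σ k.castSucc)} := by
    ext x; simp [gapSet]
  rw [this]
  exact MeasurableSet.iInter fun k =>
    measurableSet_lt measurable_const
      ((measurable_pi_apply (σ k.succ)).sub (measurable_pi_apply (σ k.castSucc)))

lemma strictMono_of_mem_gapSet {δ : ℝ} (hδ : 0 ≤ δ) {σ : Equiv.Perm (Fin (N + 2))}
    {x : Fin (N + 2) → ℝ} (hx : x ∈ gapSet δ σ) : StrictMono (x ∘ σ) := by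
  rw [Fin.strictMono_iff_lt_succ]
  intro k
  have := hx k
  simp only [Function.comp_apply]
  linarith

lemma perm_eq_of_strictMono {x : Fin (N + 2) → ℝ} {σ τ : Equiv.Perm (Fin (N + 2))}
    (hσ : StrictMono (x ∘ σ)) (hτ : StrictMono (x ∘ τ)) : σ = τ := by
  have hinj : Function.Injective x := by
    have : Function.Injective ((x ∘ σ) ∘ σ.symm) := hσ.injective.comp σ.symm.injective
    simpa [Function.comp_def] using this
  haveI : WellFoundedLT (Fin (N + 2)) := Finite.to_wellFoundedLT
  have h : x ∘ σ = x ∘ τ := (StrictMono.range_inj (β := Fin (N + 2)) hσ hτ).1 (by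
    rw [Set.range_comp, Set.range_comp, Equiv.range_eq_univ, Equiv.range_eq_univ])
  ext i
  exact congrArg Fin.val (hinj (congrFun h i))

lemma pairwise_disjoint_gapSet {δ : ℝ} (hδ : 0 ≤ δ) :
    Pairwise fun σ τ : Equiv.Perm (Fin (N + 2)) => Disjoint (gapSet δ σ) (gapSet δ τ) := by
  intro σ τ hστ
  rw [Set.disjoint_left]
  intro x hxσ hxτ
  exact hστ (perm_eq_of_strictMono (strictMono_of_mem_gapSet hδ hxσ)
    (strictMono_of_mem_gapSet hδ hxτ))

lemma minGap_def (x : Fin (N + 2) → ℝ) :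
    minGap (N + 2) x =
      ⨅ i : Fin (N + 1), (x (Tuple.sort x i.succ) - x (Tuple.sort x i.castSucc)) := rfl

lemma lt_minGap_iff (δ : ℝ) (x : Fin (N + 2) → ℝ) :
    δ < minGap (N + 2) x ↔
      ∀ k : Fin (N + 1), δ < x (Tuple.sort x k.succ) - x (Tuple.sort x k.castSucc) := by
  rw [minGap_def, ← Finset.inf'_univ_eq_ciInf, Finset.lt_inf'_iff]
  simp

lemma event_eq {δ : ℝ} (hδ : 0 ≤ δ) :
    {x : Fin (N + 2) → ℝ | δ < minGap (N + 2) x} =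
      ⋃ σ : Equiv.Perm (Fin (N + 2)), gapSet δ σ := by
  ext x
  simp only [Set.mem_setOf_eq, Set.mem_iUnion, lt_minGap_iff]
  constructor
  · intro h
    exact ⟨Tuple.sort x, h⟩
  · rintro ⟨σ, hσ⟩
    have hmono : Monotone (x ∘ σ) := (strictMono_of_mem_gapSet hδ hσ).monotone
    have he : x ∘ σ = x ∘ Tuple.sort x := Tuple.comp_sort_eq_comp_iff_monotone.mpr hmono
    intro k
    have h1 : x (Tuple.sort x k.succ) = x (σ k.succ) := (congrFun he k.succ).symm
    have h2 : x (Tuple.sort x k.castSucc) = x (σ k.castSucc) := (congrFun he k.castSucc).symm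
    rw [h1, h2]
    exact hσ k

lemma gapSet_inter_box (δ W : ℝ) (hδ0 : 0 ≤ δ) (σ : Equiv.Perm (Fin (N + 2))) :
    gapSet δ σ ∩ Set.univ.pi (fun _ => Set.Icc (0:ℝ) W) =
      (fun x => (fun i : Fin (N + 2) => -(((σ.symm i : ℕ) : ℝ) * δ)) + x) ⁻¹'
        (gapSet 0 σ ∩ Set.univ.pi (fun _ => Set.Icc (0:ℝ) (W - (N + 1) * δ))) := by
  ext x
  simp only [Set.mem_inter_iff, Set.mem_preimage, Set.mem_univ_pi, Set.mem_Icc, gapSet,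
    Set.mem_setOf_eq, Pi.add_apply, neg_add_eq_sub]
  constructor
  · rintro ⟨h1, h2⟩
    have hgm : StrictMono (fun k : Fin (N + 2) => x (σ k) - ((k : ℕ) : ℝ) * δ) := by
      rw [Fin.strictMono_iff_lt_succ]
      intro k
      have := h1 k
      simp only [Fin.coe_castSucc, Fin.val_succ]
      push_cast
      linarith
    have key : ∀ j : Fin (N + 2),
        x (σ j) - ((j : ℕ) : ℝ) * δ ∈ Set.Icc (0:ℝ) (W - (N + 1) * δ) := by
      intro j
      constructor
      · have h0 : (0:ℝ) ≤ x (σ 0) - ((0 : Fin (N + 2)) : ℕ) * δ := by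
          simpa using (h2 (σ 0)).1
        exact le_trans h0 (hgm.monotone (Fin.zero_le _))
      · have hl : x (σ (Fin.last (N + 1))) - ((Fin.last (N + 1) : ℕ) : ℝ) * δ ≤
            W - (N + 1) * δ := by
          have := (h2 (σ (Fin.last (N + 1)))).2
          simp only [Fin.val_last]
          push_cast
          linarith
        exact le_trans (hgm.monotone (Fin.le_last _)) hl
    refine ⟨fun k => ?_, fun i => ?_⟩
    · have := h1 k
      simp only [Equiv.symm_apply_apply, Fin.coe_castSucc, Fin.val_succ]
      push_cast
      linarith
    · have := key (σ.symm i)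
      simpa using this
  · rintro ⟨h1, h2⟩
    refine ⟨fun k => ?_, fun i => ?_⟩
    · have := h1 k
      simp only [Equiv.symm_apply_apply, Fin.coe_castSucc, Fin.val_succ] at this
      push_cast at this
      linarith
    · have h := h2 i
      have hk : ((σ.symm i : ℕ) : ℝ) ≤ (N : ℝ) + 1 := by
        have := Fin.is_le (σ.symm i)
        exact_mod_cast this
      have hk0 : (0:ℝ) ≤ ((σ.symm i : ℕ) : ℝ) * δ :=
        mul_nonneg (Nat.cast_nonneg _) hδ0
      have hk1 : ((σ.symm i : ℕ) : ℝ) * δ ≤ ((N:ℝ) + 1) * δ :=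
        mul_le_mul_of_nonneg_right hk hδ0
      constructor <;> push_cast at h ⊢ <;> [linarith [h.1]; linarith [h.2]]

/-- The set of non-injective tuples is null. -/
lemma volume_nonInj_eq_zero :
    (volume : Measure (Fin (N + 2) → ℝ))
      {y : Fin (N + 2) → ℝ | ¬ Function.Injective y} = 0 := by
  have hsub : {y : Fin (N + 2) → ℝ | ¬ Function.Injective y} ⊆
      ⋃ p : Fin (N + 2) × Fin (N + 2),
        {y : Fin (N + 2) → ℝ | p.1 ≠ p.2 ∧ y p.1 = y p.2} := by
    intro y hy
    simp only [Set.mem_setOf_eq, Function.Injective, not_forall] at hy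
    obtain ⟨a, b, hab, hne⟩ := hy
    exact Set.mem_iUnion.2 ⟨(a, b), hne, hab⟩
  refine measure_mono_null hsub (measure_iUnion_null fun p => ?_)
  by_cases hp : p.1 = p.2
  · simp [hp]
  · have hsub2 : {y : Fin (N + 2) → ℝ | p.1 ≠ p.2 ∧ y p.1 = y p.2} ⊆
        (LinearMap.ker ((LinearMap.proj p.1 : (Fin (N + 2) → ℝ) →ₗ[ℝ] ℝ) -
          LinearMap.proj p.2) : Submodule ℝ (Fin (N + 2) → ℝ)) := by
      rintro y ⟨-, hy⟩
      simp [LinearMap.mem_ker, hy]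
    refine measure_mono_null hsub2 (Measure.addHaar_submodule _ _ ?_)
    intro htop
    have hmem : Pi.single p.1 (1:ℝ) ∈ (LinearMap.ker ((LinearMap.proj p.1 :
        (Fin (N + 2) → ℝ) →ₗ[ℝ] ℝ) - LinearMap.proj p.2) : Submodule ℝ (Fin (N + 2) → ℝ)) := by
      rw [htop]; trivial
    simp only [LinearMap.mem_ker, LinearMap.sub_apply, LinearMap.proj_apply] at hmem
    rw [Pi.single_eq_same, Pi.single_eq_of_ne (Ne.symm hp)] at hmem
    norm_num at hmem

lemma volume_union_gapSet (L : ℝ) :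
    (volume : Measure (Fin (N + 2) → ℝ))
        (⋃ σ : Equiv.Perm (Fin (N + 2)),
          gapSet 0 σ ∩ Set.univ.pi (fun _ => Set.Icc (0:ℝ) L)) =
      (volume : Measure (Fin (N + 2) → ℝ)) (Set.univ.pi fun _ => Set.Icc (0:ℝ) L) := by
  set B := Set.univ.pi fun _ : Fin (N + 2) => Set.Icc (0:ℝ) L with hB
  refine le_antisymm (measure_mono (by simp [Set.iUnion_subset_iff])) ?_
  have hdiff : B \ (⋃ σ : Equiv.Perm (Fin (N + 2)), gapSet 0 σ ∩ B) ⊆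
      {y : Fin (N + 2) → ℝ | ¬ Function.Injective y} := by
    rintro y ⟨hyB, hy⟩
    simp only [Set.mem_iUnion, not_exists, Set.mem_inter_iff, not_and] at hy
    intro hinj
    have hmono : Monotone (y ∘ Tuple.sort y) := Tuple.monotone_sort y
    have hsm : StrictMono (y ∘ Tuple.sort y) :=
      hmono.strictMono_of_injective (hinj.comp (Tuple.sort y).injective)
    refine hy (Tuple.sort y) ?_ hyB
    intro k
    have := hsm (Fin.castSucc_lt_succ : k.castSucc < k.succ)
    simp only [Function.comp_apply] at this
    linarith
  have h0 : (volume : Measure (Fin (N + 2) → ℝ))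
      (B \ (⋃ σ : Equiv.Perm (Fin (N + 2)), gapSet 0 σ ∩ B)) = 0 :=
    measure_mono_null hdiff volume_nonInj_eq_zero
  calc (volume : Measure (Fin (N + 2) → ℝ)) B
      ≤ volume (⋃ σ : Equiv.Perm (Fin (N + 2)), gapSet 0 σ ∩ B) +
        volume (B \ (⋃ σ : Equiv.Perm (Fin (N + 2)), gapSet 0 σ ∩ B)) := by
        refine le_trans (measure_mono ?_) (measure_union_le _ _)
        intro y hy
        by_cases h : y ∈ ⋃ σ : Equiv.Perm (Fin (N + 2)), gapSet 0 σ ∩ B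
        · exact Or.inl h
        · exact Or.inr ⟨hy, h⟩
    _ = volume (⋃ σ : Equiv.Perm (Fin (N + 2)), gapSet 0 σ ∩ B) := by rw [h0, add_zero]

end CcdfAux

lemma uniformProd_eq_restrict (M : ℕ) (W : ℝ) (hW : 0 < W) :
    uniformProd M W =
      ((ENNReal.ofReal W)⁻¹ ^ M) •
        (volume : Measure (Fin M → ℝ)).restrict (Set.univ.pi fun _ => Set.Icc (0:ℝ) W) := by
  set c := (ENNReal.ofReal W)⁻¹ with hc
  haveI hfin : ∀ i : Fin M, IsFiniteMeasure (c • volume.restrict (Set.Icc (0:ℝ) W)) := by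
    intro i
    refine ⟨?_⟩
    rw [Measure.smul_apply, smul_eq_mul, Measure.restrict_apply MeasurableSet.univ,
      Set.univ_inter, Real.volume_Icc]
    exact ENNReal.mul_lt_top (ENNReal.inv_lt_top.2 (ENNReal.ofReal_pos.2 hW))
      ENNReal.ofReal_lt_top
  refine Measure.pi_eq fun s hs => ?_
  rw [Measure.smul_apply, smul_eq_mul,
    Measure.restrict_apply (MeasurableSet.univ_pi hs),
    ← Set.pi_inter_distrib, volume_pi_pi]
  have : ∀ i : Fin M, (c • volume.restrict (Set.Icc (0:ℝ) W)) (s i) =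
      c * volume (s i ∩ Set.Icc (0:ℝ) W) := by
    intro i
    rw [Measure.smul_apply, smul_eq_mul, Measure.restrict_apply (hs i)]
  simp only [← hc, this]
  rw [Finset.prod_mul_distrib, Finset.prod_const, Finset.card_univ, Fintype.card_fin]

theorem ccdf_minGap (M : ℕ) (hM : 2 ≤ M) (W δ : ℝ) (hW : 0 < W)
    (hδ0 : 0 ≤ δ) (hδ : δ ≤ W / ((M : ℝ) - 1)) :
    uniformProd M W {x | δ < minGap M x} =
      ENNReal.ofReal ((1 - ((M : ℝ) - 1) * δ / W) ^ M) := by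
  obtain ⟨N, rfl⟩ : ∃ N, M = N + 2 := ⟨M - 2, by omega⟩
  open CcdfAux in
  set L : ℝ := W - (N + 1) * δ with hL
  have hcast : ((N + 2 : ℕ) : ℝ) - 1 = (N : ℝ) + 1 := by push_cast; ring
  have hNpos : (0:ℝ) < (N : ℝ) + 1 := by positivity
  have hLnn : 0 ≤ L := by
    rw [hcast] at hδ
    have : ((N:ℝ) + 1) * δ ≤ W := by
      rw [div_eq_mul_inv] at hδ
      calc ((N:ℝ) + 1) * δ ≤ ((N:ℝ) + 1) * (W * ((N:ℝ) + 1)⁻¹) :=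
            mul_le_mul_of_nonneg_left hδ (le_of_lt hNpos)
        _ = W := by field_simp
    simp [hL]; linarith
  set c := (ENNReal.ofReal W)⁻¹ with hc
  set B := Set.univ.pi fun _ : Fin (N + 2) => Set.Icc (0:ℝ) W with hB
  set BL := Set.univ.pi fun _ : Fin (N + 2) => Set.Icc (0:ℝ) L with hBL
  have hBmeas : MeasurableSet B := MeasurableSet.univ_pi fun _ => measurableSet_Icc
  have hEvent : {x : Fin (N + 2) → ℝ | δ < minGap (N + 2) x} =
      ⋃ σ : Equiv.Perm (Fin (N + 2)), gapSet δ σ := event_eq hδ0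
  have hEmeas : MeasurableSet {x : Fin (N + 2) → ℝ | δ < minGap (N + 2) x} := by
    rw [hEvent]; exact MeasurableSet.iUnion fun σ => measurableSet_gapSet δ σ
  rw [uniformProd_eq_restrict _ _ hW, Measure.smul_apply, smul_eq_mul,
    Measure.restrict_apply hEmeas, hEvent, Set.iUnion_inter]
  have hdisj : Pairwise (Function.onFun Disjoint
      fun σ : Equiv.Perm (Fin (N + 2)) => gapSet δ σ ∩ B) := by
    intro σ τ hστ
    exact Set.disjoint_of_subset Set.inter_subset_left Set.inter_subset_left
      (pairwise_disjoint_gapSet hδ0 hστ)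
  have hdisj0 : Pairwise (Function.onFun Disjoint
      fun σ : Equiv.Perm (Fin (N + 2)) => gapSet 0 σ ∩ BL) := by
    intro σ τ hστ
    exact Set.disjoint_of_subset Set.inter_subset_left Set.inter_subset_left
      (pairwise_disjoint_gapSet le_rfl hστ)
  rw [measure_iUnion hdisj (fun σ => (measurableSet_gapSet δ σ).inter hBmeas)]
  have hterm : ∀ σ : Equiv.Perm (Fin (N + 2)),
      volume (gapSet δ σ ∩ B) = volume (gapSet 0 σ ∩ BL) := by
    intro σ
    rw [hB, gapSet_inter_box δ W hδ0 σ]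
    rw [measure_preimage_add]
  simp only [hterm]
  rw [← measure_iUnion hdisj0 (fun σ =>
    (measurableSet_gapSet 0 σ).inter (MeasurableSet.univ_pi fun _ => measurableSet_Icc))]
  rw [volume_union_gapSet L]
  have hBLvol : (volume : Measure (Fin (N + 2) → ℝ)) BL = (ENNReal.ofReal L) ^ (N + 2) := by
    rw [hBL, volume_pi_pi]
    simp [Real.volume_Icc]
  rw [hBLvol]
  rw [← mul_pow]
  have hcL : c * ENNReal.ofReal L = ENNReal.ofReal (L / W) := by
    rw [ENNReal.ofReal_div_of_pos hW, ENNReal.div_eq_inv_mul]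
  rw [hcL, ← ENNReal.ofReal_pow (by positivity)]
  congr 2
  rw [hcast]
  field_simp
  exact hL
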